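/- arXiv:0911.2052 — 5 statements merged into one kernel-verified Lean document; each statement's English description precedes it below -/
import Mathlib

section
/- Let M be a unital associative algebra over ℂ, let τ : M → ℂ be a linear functional, let A and B be unital subalgebras of M, let D be a unital subalgebra of A ∩ B, and let E_A : A → D and E_B : B → D be conditional expectations. Write A ⊖ D = A ∩ ker E_A and B ⊖ D = B ∩ ker E_B, and assume Λ°(A ⊖ D, B ⊖ D) ⊆ ker τ (freeness of A and B with amalgamation over D with respect to τ). Let Θ be the set of all elements of M expressible as a product of a sequence alternating between A ⊖ D and B ⊖ D whose first and last factors lie in B ⊖ D, and let C ⊆ A ∩ ker E_A be any subset. Then Λ°(Θ, C) ⊆ ker τ. -/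
/-! An element of `Λ°(Θ, C)` is an alternating product of words from `Θ`, which begin and end
with letters from `B ⊖ D`, and of single letters from `C ⊆ A ⊖ D`. Concatenating these words
yields one alternating word in `(A ⊖ D, B ⊖ D)`, so freeness puts it in `ker τ`. -/

/-- `altSet X Y` is Λ°(X, Y): the set of all products `c₁c₂⋯cₙ`, `n ≥ 1`, where each
factor lies in `X` or in `Y` and consecutive factors come from different sets. -/
def altSet {M : Type*} [Monoid M] (X Y : Set M) : Set M :=
  { m | ∃ (n : ℕ) (_hn : 0 < n) (c : Fin n → M) (lab : Fin n → Bool),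
      (∀ j, if lab j then c j ∈ X else c j ∈ Y) ∧
      (∀ (j : ℕ) (h : j + 1 < n),
        lab ⟨j, Nat.lt_of_succ_lt h⟩ ≠ lab ⟨j + 1, h⟩) ∧
      m = (List.ofFn c).prod }

/-- `altEnds X Y fb lb` is the set of alternating products in `(X, Y)` whose first
factor comes from `X` (if `fb = true`) or from `Y` (if `fb = false`), and similarly
for the last factor according to `lb`. -/
def altEnds {M : Type*} [Monoid M] (X Y : Set M) (fb lb : Bool) : Set M :=
  { m | ∃ (n : ℕ) (hn : 0 < n) (c : Fin n → M) (lab : Fin n → Bool),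
      (∀ j, if lab j then c j ∈ X else c j ∈ Y) ∧
      (∀ (j : ℕ) (h : j + 1 < n),
        lab ⟨j, Nat.lt_of_succ_lt h⟩ ≠ lab ⟨j + 1, h⟩) ∧
      lab ⟨0, hn⟩ = fb ∧ lab ⟨n - 1, Nat.sub_lt hn Nat.one_pos⟩ = lb ∧
      m = (List.ofFn c).prod }

section AlternatingWords

variable {M : Type*} [Monoid M] {X Y : Set M}

lemma altEnds_subset_altSet {f l : Bool} : altEnds X Y f l ⊆ altSet X Y := by
  rintro m ⟨n, hn, c, lab, hc, halt, -, -, rfl⟩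
  exact ⟨n, hn, c, lab, hc, halt, rfl⟩

lemma exists_mem_altEnds_of_mem_altSet {m : M} (h : m ∈ altSet X Y) :
    ∃ f l, m ∈ altEnds X Y f l := by
  obtain ⟨n, hn, c, lab, hc, halt, rfl⟩ := h
  exact ⟨_, _, n, hn, c, lab, hc, halt, rfl, rfl, rfl⟩

lemma altSet_comm : altSet X Y = altSet Y X := by
  suffices ∀ X Y : Set M, altSet X Y ⊆ altSet Y X from (this X Y).antisymm (this Y X)
  rintro X Y m ⟨n, hn, c, lab, hc, halt, rfl⟩
  refine ⟨n, hn, c, fun j => !lab j, fun j => ?_, fun j h => by simpa using halt j h, rfl⟩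
  simpa [apply_ite (· ∈ X), ite_not] using hc j

lemma mem_altEnds_self {x : M} {b : Bool} (hx : if b then x ∈ X else x ∈ Y) :
    x ∈ altEnds X Y b b :=
  ⟨1, one_pos, fun _ => x, fun _ => b, fun _ => hx, fun _ h => by omega, rfl, rfl, by simp⟩

lemma letter_mul_mem_altEnds {x w : M} {b l : Bool} (hx : if b then x ∈ X else x ∈ Y)
    (hw : w ∈ altEnds X Y (!b) l) : x * w ∈ altEnds X Y b l := by
  obtain ⟨n, hn, c, lab, hc, halt, hfirst, hlast, rfl⟩ := hw
  refine ⟨n + 1, n.succ_pos, Fin.cons x c, Fin.cons b lab, Fin.cases hx hc, ?_, rfl, ?_, ?_⟩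
  · rintro (_ | j) h
    · change b ≠ lab ⟨0, hn⟩
      simp [hfirst]
    · exact halt j (by omega)
  · obtain ⟨k, rfl⟩ := Nat.exists_eq_succ_of_ne_zero hn.ne'
    exact hlast
  · simp [List.ofFn_succ]

theorem altEnds.induction_on {P : Bool → Bool → M → Prop}
    (self : ∀ b x, (if b then x ∈ X else x ∈ Y) → P b b x)
    (mul : ∀ b l x w, (if b then x ∈ X else x ∈ Y) → w ∈ altEnds X Y (!b) l →
      P (!b) l w → P b l (x * w))
    {f l : Bool} {m : M} (hm : m ∈ altEnds X Y f l) : P f l m := by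
  obtain ⟨n, hn, c, lab, hc, halt, rfl, rfl, rfl⟩ := hm
  induction n with
  | zero => omega
  | succ n ih =>
    rcases n with _ | n
    · simpa using self _ _ (hc 0)
    have hnext : lab 1 = !lab 0 := Bool.eq_not_iff.mpr (halt 0 (by omega)).symm
    have htail := ih (c := Fin.tail c) (lab := Fin.tail lab) n.succ_pos (fun j => hc j.succ)
      (fun j h => halt (j + 1) (by omega))
    rw [List.ofFn_succ, List.prod_cons]
    refine mul _ _ _ _ (hc 0) ?_ ?_
    · exact ⟨n + 1, n.succ_pos, Fin.tail c, Fin.tail lab, fun j => hc j.succ,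
        fun j h => halt (j + 1) (by omega), hnext, rfl, rfl⟩
    · exact hnext ▸ htail

lemma mul_mem_altEnds {u w : M} {f₁ l₁ f₂ l₂ : Bool} (hu : u ∈ altEnds X Y f₁ l₁)
    (hw : w ∈ altEnds X Y f₂ l₂) (hne : l₁ ≠ f₂) : u * w ∈ altEnds X Y f₁ l₂ := by
  refine altEnds.induction_on (P := fun f l u => l ≠ f₂ → u * w ∈ altEnds X Y f l₂)
    (fun b x hx hne => ?_) (fun b l x v hx _ ih hne => ?_) hu hne
  · rw [Bool.eq_not_iff.mpr hne.symm] at hw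
    exact letter_mul_mem_altEnds hx hw
  · rw [mul_assoc]
    exact letter_mul_mem_altEnds hx (ih hne)

variable {X' Y' : Set M}

lemma altEnds_subset_of_subset_altEnds (hX : X' ⊆ altEnds X Y true true)
    (hY : Y' ⊆ altEnds X Y false false) {f l : Bool} :
    altEnds X' Y' f l ⊆ altEnds X Y f l := by
  have hletter : ∀ b x, (if b then x ∈ X' else x ∈ Y') → x ∈ altEnds X Y b b := by
    rintro (_ | _) x hx
    exacts [hY hx, hX hx]
  exact fun m => altEnds.induction_on (P := fun f l m => m ∈ altEnds X Y f l) hletter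
    fun b l x w hx _ ih => mul_mem_altEnds (hletter b x hx) ih (by simp)

lemma altSet_subset_of_subset_altEnds (hX : X' ⊆ altEnds X Y true true)
    (hY : Y' ⊆ altEnds X Y false false) : altSet X' Y' ⊆ altSet X Y := by
  intro m hm
  obtain ⟨f, l, hm⟩ := exists_mem_altEnds_of_mem_altSet hm
  exact altEnds_subset_altSet (altEnds_subset_of_subset_altEnds hX hY hm)

end AlternatingWords

theorem altSet_theta_subset_ker_general {M : Type*} [Ring M] [Algebra ℂ M]
    (τ : M →ₗ[ℂ] ℂ)
    (A B D : Subalgebra ℂ M)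
    (EA : ↥A →ₗ[ℂ] ↥D) (EB : ↥B →ₗ[ℂ] ↥D)
    (hfree : altSet { x : M | ∃ hx : x ∈ A, EA ⟨x, hx⟩ = 0 }
                    { x : M | ∃ hx : x ∈ B, EB ⟨x, hx⟩ = 0 } ⊆ { x : M | τ x = 0 })
    (C : Set M)
    (hC : C ⊆ { x : M | ∃ hx : x ∈ A, EA ⟨x, hx⟩ = 0 }) :
    altSet (altEnds { x : M | ∃ hx : x ∈ A, EA ⟨x, hx⟩ = 0 }
                    { x : M | ∃ hx : x ∈ B, EB ⟨x, hx⟩ = 0 } false false) C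
      ⊆ { x : M | τ x = 0 } := by
  rw [altSet_comm]
  exact (altSet_subset_of_subset_altEnds (fun x hx => mem_altEnds_self (b := true) (hC hx))
    subset_rfl).trans hfree

/-- Freeness verification: if `A` and `B` are free with amalgamation over `D` with
respect to `τ` (i.e. `Λ°(A ⊖ D, B ⊖ D) ⊆ ker τ`), `Θ` is the set of alternating words
in `(A ⊖ D, B ⊖ D)` beginning and ending with letters from `B ⊖ D`, and
`C ⊆ A ∩ ker E_A`, then `Λ°(Θ, C) ⊆ ker τ`. -/
theorem altSet_theta_subset_ker {M : Type*} [Ring M] [Algebra ℂ M]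
    (τ : M →ₗ[ℂ] ℂ)
    (A B D : Subalgebra ℂ M) (hDA : D ≤ A) (hDB : D ≤ B)
    (EA : ↥A →ₗ[ℂ] ↥D) (EB : ↥B →ₗ[ℂ] ↥D)
    (hEA1 : ∀ d : ↥D, EA ⟨(d : M), hDA d.2⟩ = d)
    (hEA2 : ∀ (d₁ d₂ : ↥D) (a : ↥A),
      ((EA (⟨(d₁ : M), hDA d₁.2⟩ * a * ⟨(d₂ : M), hDA d₂.2⟩) : ↥D) : M)
        = (d₁ : M) * ((EA a : ↥D) : M) * (d₂ : M))
    (hEB1 : ∀ d : ↥D, EB ⟨(d : M), hDB d.2⟩ = d)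
    (hEB2 : ∀ (d₁ d₂ : ↥D) (b : ↥B),
      ((EB (⟨(d₁ : M), hDB d₁.2⟩ * b * ⟨(d₂ : M), hDB d₂.2⟩) : ↥D) : M)
        = (d₁ : M) * ((EB b : ↥D) : M) * (d₂ : M))
    (hfree : altSet { x : M | ∃ hx : x ∈ A, EA ⟨x, hx⟩ = 0 }
                    { x : M | ∃ hx : x ∈ B, EB ⟨x, hx⟩ = 0 } ⊆ { x : M | τ x = 0 })
    (C : Set M)
    (hC : C ⊆ { x : M | ∃ hx : x ∈ A, EA ⟨x, hx⟩ = 0 }) :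
    altSet (altEnds { x : M | ∃ hx : x ∈ A, EA ⟨x, hx⟩ = 0 }
                    { x : M | ∃ hx : x ∈ B, EB ⟨x, hx⟩ = 0 } false false) C
      ⊆ { x : M | τ x = 0 } :=
  altSet_theta_subset_ker_general τ A B D EA EB hfree C hC
end

section
/- Let M be a monoid, let X, Y ⊆ M, let X₀ ⊆ X, and let V₁, V₂ ⊆ X be subsets such that x₀v₁ ∈ X for all x₀ ∈ X₀, v₁ ∈ V₁, and v₂x₀ ∈ X for all v₂ ∈ V₂, x₀ ∈ X₀. Consider a finite sequence of labeled blocks w₁, …, wₙ whose types alternate between type I and type II (consecutive blocks have different types), where a type I block is labeled either (a) an alternating product in (X, Y) whose first and last factors lie in X, or (b) a single element of V₁, or (c) a single element of V₂, and where a type II block is an alternating product in (X₀, Y) whose first factor lies in Y or whose last factor lies in Y (or both). Assume: whenever a type II block has its last factor in X₀ (not in Y), it is not the last block and the next block is of label (b); and whenever a type II block has its first factor in X₀ (not in Y), it is not the first block and the previous block is of label (c). Then the product w₁w₂⋯wₙ belongs to Λ°(X, Y). -/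
/-- Labels for the blocks appearing in the concatenation argument: type I blocks are
labeled `a` (an alternating product in `(X, Y)` with first and last factors in `X`),
`b` (a single element of `V₁`) or `c` (a single element of `V₂`); a type II block
`II fb lb` is an alternating product in `(X₀, Y)` with endpoint labels `fb`, `lb`
(`true` meaning the factor is in `X₀`, `false` meaning it is in `Y`). -/
inductive BlockLabel
  | a : BlockLabel
  | b : BlockLabel
  | c : BlockLabel
  | II : Bool → Bool → BlockLabel

/-- A block is of type II iff its label is of the form `II fb lb`. -/
def BlockLabel.isII : BlockLabel → Bool
  | .II _ _ => true
  | _ => false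

/-!
Read the blocks from left to right, keeping an alternating `(X, Y)`-word whose product is the
product of the blocks read so far. A block is appended to the word when its first letter carries
the other tag than the last letter of the word. Otherwise both letters lie in `X`, which the
hypotheses allow only for an `X₀`-letter followed by a `V₁`-block or a `V₂`-block followed by an
`X₀`-letter; then the two letters are fused into the single `X`-letter `x₀v₁` or `v₂x₀`. For this
the word has to remember which set its last letter comes from (`LastLetterOK`).
-/

open List

section AltWord

variable {M : Type*} {X X' Y : Set M} {l l' : List (M × Bool)}

def IsAltWord (X Y : Set M) (l : List (M × Bool)) : Prop :=
  (∀ p ∈ l, if p.2 then p.1 ∈ X else p.1 ∈ Y) ∧ l.IsChain (fun p q => p.2 ≠ q.2)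

theorem isAltWord_ofFn {n : ℕ} {c : Fin n → M} {lab : Fin n → Bool} :
    IsAltWord X Y (ofFn fun j => (c j, lab j)) ↔
      (∀ j, if lab j then c j ∈ X else c j ∈ Y) ∧
        ∀ (j : ℕ) (h : j + 1 < n), lab ⟨j, Nat.lt_of_succ_lt h⟩ ≠ lab ⟨j + 1, h⟩ := by
  simp [IsAltWord, isChain_ofFn]

namespace IsAltWord

theorem mono (hX : X ⊆ X') (h : IsAltWord X Y l) : IsAltWord X' Y l := by
  refine ⟨fun p hp => ?_, h.2⟩
  have hmem := h.1 p hp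
  split_ifs at hmem ⊢
  exacts [hX hmem, hmem]

theorem append (h : IsAltWord X Y l) (h' : IsAltWord X Y l')
    (hjoin : ∀ p ∈ l.getLast?, ∀ q ∈ l'.head?, p.2 ≠ q.2) : IsAltWord X Y (l ++ l') :=
  ⟨by simpa [or_imp, forall_and] using And.intro h.1 h'.1, h.2.append h'.2 hjoin⟩

theorem of_cons {q : M × Bool} (h : IsAltWord X Y (q :: l)) : IsAltWord X Y l :=
  ⟨fun p hp => h.1 p (mem_cons_of_mem _ hp), h.2.tail⟩

theorem fuse_last [Mul M] {x y : M} (h : IsAltWord X Y (l ++ [(x, true)])) (hxy : x * y ∈ X) :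
    IsAltWord X Y (l ++ [(x * y, true)]) := by
  obtain ⟨hmem, hchain⟩ := h
  refine ⟨?_, by simpa [isChain_append] using hchain⟩
  simp only [mem_append, mem_singleton] at hmem ⊢
  rintro p (hp | rfl)
  exacts [hmem p (.inl hp), by simpa using hxy]

theorem prod_mem_altSet [Monoid M] (h : IsAltWord X Y l) (hl : l ≠ []) :
    (l.map Prod.fst).prod ∈ altSet X Y := by
  have hofFn := isAltWord_ofFn.1 (ofFn_getElem (xs := l) ▸ h)
  exact ⟨l.length, length_pos_iff.2 hl, _, _, hofFn.1, hofFn.2, by simp⟩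

end IsAltWord

theorem exists_isAltWord_of_mem_altEnds [Monoid M] {fb lb : Bool} {m : M}
    (hm : m ∈ altEnds X Y fb lb) :
    ∃ l, IsAltWord X Y l ∧ (l.map Prod.fst).prod = m ∧
      (∀ q ∈ l.head?, q.2 = fb) ∧ ∃ p ∈ l.getLast?, p.2 = lb := by
  obtain ⟨n, hn, c, lab, hmem, halt, hfb, hlb, rfl⟩ := hm
  have hne : ofFn (fun j => (c j, lab j)) ≠ [] := by simp; omega
  refine ⟨_, isAltWord_ofFn.2 ⟨hmem, halt⟩, by rw [map_ofFn]; rfl, fun q hq => ?_,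
    _, getLast?_eq_some_getLast hne, by rw [getLast_ofFn]; exact hlb⟩
  rw [head?_eq_some_head hne, Option.mem_def, Option.some_inj, head_ofFn] at hq
  rw [← hq, ← hfb]

end AltWord

namespace BlockLabel

def headTag : BlockLabel → Bool
  | .II fb _ => fb
  | _ => true

def lastTag : BlockLabel → Bool
  | .II _ lb => lb
  | _ => true

theorem exists_eq_II_of_lastTag_eq_headTag {P Q : BlockLabel} (htype : P.isII ≠ Q.isII)
    (htag : P.lastTag = Q.headTag) : (∃ fb, P = .II fb true) ∨ ∃ lb, Q = .II true lb := by
  cases P <;> cases Q <;> simp_all [isII, lastTag, headTag]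

end BlockLabel

section Blocks

variable {M : Type*} {X Y X₀ V₁ V₂ : Set M} {P Q : BlockLabel} {m w : M}

def LastLetterOK (X₀ V₂ : Set M) : BlockLabel → M × Bool → Prop
  | .c, p => p.2 = true ∧ p.1 ∈ V₂
  | .II _ true, p => p.2 = true ∧ p.1 ∈ X₀
  | lab, p => p.2 = lab.lastTag

theorem LastLetterOK.tag_eq {p : M × Bool} (h : LastLetterOK X₀ V₂ P p) : p.2 = P.lastTag := by
  rcases P with _ | _ | _ | ⟨_, _ | _⟩ <;> first | exact h | exact h.1

variable [Monoid M]

def IsBlock (X Y X₀ V₁ V₂ : Set M) : BlockLabel → M → Prop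
  | .a, w => w ∈ altEnds X Y true true
  | .b, w => w ∈ V₁
  | .c, w => w ∈ V₂
  | .II fb lb, w => w ∈ altEnds X₀ Y fb lb ∧ (fb = false ∨ lb = false)

theorem IsBlock.exists_isAltWord (hX₀ : X₀ ⊆ X) (hV₁ : V₁ ⊆ X) (hV₂ : V₂ ⊆ X)
    (hw : IsBlock X Y X₀ V₁ V₂ Q w) :
    ∃ u, IsAltWord X Y u ∧ (u.map Prod.fst).prod = w ∧ (∀ q ∈ u.head?, q.2 = Q.headTag) ∧
      ∃ p ∈ u.getLast?, LastLetterOK X₀ V₂ Q p := by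
  have single {v : M} (hv : v ∈ X) : IsAltWord X Y [(v, true)] :=
    ⟨by simpa using hv, isChain_singleton _⟩
  cases Q with
  | a => exact exists_isAltWord_of_mem_altEnds hw
  | b => exact ⟨_, single (hV₁ hw), by simp, by simp [BlockLabel.headTag], _, rfl, rfl⟩
  | c => exact ⟨_, single (hV₂ hw), by simp, by simp [BlockLabel.headTag], _, rfl, rfl, hw⟩
  | II fb lb =>
    obtain ⟨u, hu, rfl, hhead, p, hp, hlast⟩ := exists_isAltWord_of_mem_altEnds hw.1
    refine ⟨u, hu.mono hX₀, rfl, hhead, p, hp, ?_⟩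
    cases lb with
    | false => exact hlast
    | true => exact ⟨hlast, by simpa [hlast] using hu.1 p (mem_of_mem_getLast? hp)⟩

def AltProdAfter (X Y X₀ V₂ : Set M) (lab : BlockLabel) (m : M) : Prop :=
  ∃ l, IsAltWord X Y l ∧ (l.map Prod.fst).prod = m ∧ ∃ p ∈ l.getLast?, LastLetterOK X₀ V₂ lab p

namespace AltProdAfter

theorem mem_altSet (h : AltProdAfter X Y X₀ V₂ P m) : m ∈ altSet X Y := by
  obtain ⟨l, hl, rfl, p, hp, -⟩ := h
  exact hl.prod_mem_altSet (ne_nil_of_mem (mem_of_mem_getLast? hp))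

theorem of_isBlock (hX₀ : X₀ ⊆ X) (hV₁ : V₁ ⊆ X) (hV₂ : V₂ ⊆ X)
    (hw : IsBlock X Y X₀ V₁ V₂ Q w) : AltProdAfter X Y X₀ V₂ Q w := by
  obtain ⟨u, hu, hprod, -, hlast⟩ := hw.exists_isAltWord hX₀ hV₁ hV₂
  exact ⟨u, hu, hprod, hlast⟩

theorem append (hX₀ : X₀ ⊆ X) (hV₁ : V₁ ⊆ X) (hV₂ : V₂ ⊆ X)
    (hm : AltProdAfter X Y X₀ V₂ P m) (hw : IsBlock X Y X₀ V₁ V₂ Q w)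
    (htag : P.lastTag ≠ Q.headTag) : AltProdAfter X Y X₀ V₂ Q (m * w) := by
  obtain ⟨l, hl, rfl, p, hp, hpOK⟩ := hm
  obtain ⟨u, hu, rfl, hhead, q, hq, hqOK⟩ := hw.exists_isAltWord hX₀ hV₁ hV₂
  refine ⟨l ++ u, hl.append hu ?_, by simp, q, mem_getLast?_append_of_mem_getLast? hq, hqOK⟩
  intro p' hp' q' hq'
  rw [Option.mem_unique hp' hp, hpOK.tag_eq, hhead q' hq']
  exact htag

theorem exists_isAltWord_fuse_mul {x : M} (hm : AltProdAfter X Y X₀ V₂ P m)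
    (hfuse : ∀ p, LastLetterOK X₀ V₂ P p → p.2 = true ∧ p.1 * x ∈ X) :
    ∃ l y, IsAltWord X Y (l ++ [(y, true)]) ∧ ((l ++ [(y, true)]).map Prod.fst).prod = m * x := by
  obtain ⟨l, hl, rfl, p, hp, hpOK⟩ := hm
  obtain ⟨hptag, hpx⟩ := hfuse p hpOK
  have hsplit := dropLast_append_getLast? p hp
  rw [← hsplit, show p = (p.1, true) from Prod.ext rfl hptag] at hl
  have hprod : (l.map Prod.fst).prod = (l.dropLast.map Prod.fst).prod * p.1 := by
    conv_lhs => rw [← hsplit]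
    simp
  exact ⟨_, _, hl.fuse_last hpx, by simp [hprod, mul_assoc]⟩

theorem fuse_b (hXV₁ : ∀ x₀ ∈ X₀, ∀ v₁ ∈ V₁, x₀ * v₁ ∈ X) {fb : Bool}
    (hm : AltProdAfter X Y X₀ V₂ (.II fb true) m) (hw : w ∈ V₁) :
    AltProdAfter X Y X₀ V₂ .b (m * w) := by
  obtain ⟨l, y, hl, hprod⟩ := hm.exists_isAltWord_fuse_mul fun p hp => ⟨hp.1, hXV₁ _ hp.2 _ hw⟩
  exact ⟨_, hl, hprod, (y, true), by simp, rfl⟩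

theorem fuse_c (hX₀ : X₀ ⊆ X) (hV₂X : ∀ v₂ ∈ V₂, ∀ x₀ ∈ X₀, v₂ * x₀ ∈ X)
    (hm : AltProdAfter X Y X₀ V₂ .c m) (hw : w ∈ altEnds X₀ Y true false) :
    AltProdAfter X Y X₀ V₂ (.II true false) (m * w) := by
  obtain ⟨u, hu, rfl, hhead, p, hp, hlast⟩ := exists_isAltWord_of_mem_altEnds hw
  obtain _ | ⟨q, t⟩ := u
  · simp at hp
  have hq : q.2 = true := hhead q rfl
  have hqX₀ : q.1 ∈ X₀ := by simpa [hq] using hu.1 q mem_cons_self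
  obtain ⟨l, y, hl, hprod⟩ := hm.exists_isAltWord_fuse_mul fun v hv => ⟨hv.1, hV₂X _ hv.2 _ hqX₀⟩
  have hpt : p ∈ t.getLast? := by
    cases t with
    | nil => simp_all
    | cons r t => simpa using hp
  have hjoin : ∀ p' ∈ (l ++ [(y, true)]).getLast?, ∀ r ∈ t.head?, p'.2 ≠ r.2 := by
    intro p' hp' r hr
    obtain rfl : (y, true) = p' := by simpa using hp'
    exact hq ▸ (isChain_cons.1 hu.2).1 r hr
  refine ⟨l ++ [(y, true)] ++ t, hl.append (hu.of_cons.mono hX₀) hjoin, ?_, p,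
    mem_getLast?_append_of_mem_getLast? hpt, hlast⟩
  rw [map_append, prod_append, hprod]
  simp [mul_assoc]

theorem next (hX₀ : X₀ ⊆ X) (hV₁ : V₁ ⊆ X) (hV₂ : V₂ ⊆ X)
    (hXV₁ : ∀ x₀ ∈ X₀, ∀ v₁ ∈ V₁, x₀ * v₁ ∈ X) (hV₂X : ∀ v₂ ∈ V₂, ∀ x₀ ∈ X₀, v₂ * x₀ ∈ X)
    (hm : AltProdAfter X Y X₀ V₂ P m) (hw : IsBlock X Y X₀ V₁ V₂ Q w)
    (htype : P.isII ≠ Q.isII) (hb : ∀ fb, P = .II fb true → Q = .b)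
    (hc : ∀ lb, Q = .II true lb → P = .c) : AltProdAfter X Y X₀ V₂ Q (m * w) := by
  by_cases htag : P.lastTag = Q.headTag
  · rcases BlockLabel.exists_eq_II_of_lastTag_eq_headTag htype htag with ⟨fb, rfl⟩ | ⟨lb, rfl⟩
    · obtain rfl := hb fb rfl
      exact hm.fuse_b hXV₁ hw
    · obtain rfl := hc lb rfl
      obtain ⟨hw, hlb⟩ := hw
      obtain rfl : lb = false := by simpa using hlb
      exact hm.fuse_c hX₀ hV₂X hw
  · exact hm.append hX₀ hV₁ hV₂ hw htag

end AltProdAfter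

end Blocks

/-- The concatenation argument from the proof of Theorem 2.1(d): a product of blocks
alternating between type I blocks (alternating `(X,Y)`-words beginning and ending in
`X`, or single elements of `V₁` or `V₂`) and type II blocks (alternating `(X₀,Y)`-words
beginning or ending in `Y`), such that a type II block ending with a factor from `X₀`
is immediately followed by a `V₁`-block and a type II block beginning with a factor
from `X₀` is immediately preceded by a `V₂`-block, lies in `Λ°(X, Y)`. -/
theorem block_concat_mem_altSet {M : Type*} [Monoid M]
    (X Y X₀ V₁ V₂ : Set M)
    (hX₀ : X₀ ⊆ X) (hV₁ : V₁ ⊆ X) (hV₂ : V₂ ⊆ X)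
    (hXV₁ : ∀ x₀ ∈ X₀, ∀ v₁ ∈ V₁, x₀ * v₁ ∈ X)
    (hV₂X : ∀ v₂ ∈ V₂, ∀ x₀ ∈ X₀, v₂ * x₀ ∈ X)
    (n : ℕ) (hn : 0 < n) (w : Fin n → M) (L : Fin n → BlockLabel)
    (htypes : ∀ (j : ℕ) (h : j + 1 < n),
      (L ⟨j, Nat.lt_of_succ_lt h⟩).isII ≠ (L ⟨j + 1, h⟩).isII)
    (hmema : ∀ j, L j = BlockLabel.a → w j ∈ altEnds X Y true true)
    (hmemb : ∀ j, L j = BlockLabel.b → w j ∈ V₁)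
    (hmemc : ∀ j, L j = BlockLabel.c → w j ∈ V₂)
    (hmemII : ∀ j fb lb, L j = BlockLabel.II fb lb →
      w j ∈ altEnds X₀ Y fb lb ∧ (fb = false ∨ lb = false))
    (hlastX₀ : ∀ (j : Fin n) (fb : Bool), L j = BlockLabel.II fb true →
      ∃ h : (j : ℕ) + 1 < n, L ⟨(j : ℕ) + 1, h⟩ = BlockLabel.b)
    (hfirstX₀ : ∀ (j : Fin n) (lb : Bool), L j = BlockLabel.II true lb →
      ∃ _h : 0 < (j : ℕ),
        L ⟨(j : ℕ) - 1, Nat.lt_of_le_of_lt (Nat.sub_le _ _) j.2⟩ = BlockLabel.c) :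
    (List.ofFn w).prod ∈ altSet X Y := by
  have hblock (j : Fin n) : IsBlock X Y X₀ V₁ V₂ (L j) (w j) := by
    cases h : L j with
    | a => exact hmema j h
    | b => exact hmemb j h
    | c => exact hmemc j h
    | II fb lb => exact hmemII j fb lb h
  have hprefix (j : ℕ) (hj : j < n) :
      AltProdAfter X Y X₀ V₂ (L ⟨j, hj⟩) ((List.ofFn w).take (j + 1)).prod := by
    induction j with
    | zero =>
      rw [List.prod_take_succ _ _ (by simpa using hj), List.getElem_ofFn, List.take_zero,
        List.prod_nil, one_mul]
      exact AltProdAfter.of_isBlock hX₀ hV₁ hV₂ (hblock _)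
    | succ j ih =>
      rw [List.prod_take_succ _ _ (by simpa using hj), List.getElem_ofFn]
      exact (ih (by omega)).next hX₀ hV₁ hV₂ hXV₁ hV₂X (hblock _) (htypes j hj)
        (fun fb h => (hlastX₀ _ fb h).2) (fun lb h => (hfirstX₀ _ lb h).2)
  have hall := hprefix (n - 1) (by omega)
  rw [Nat.sub_add_cancel hn, List.take_of_length_le (by simp)] at hall
  exact hall.mem_altSet
end

section
/- Let R be a *-ring, let I be a finite index set, let v, x : I → R and y ∈ R satisfy: vᵢvᵢ*vᵢ = vᵢ and xᵢxᵢ*xᵢ = xᵢ for all i, and yy*y = y; (vᵢ*vᵢ)(vⱼ*vⱼ) = 0 and (xᵢ*xᵢ)(xⱼ*xⱼ) = 0 whenever i ≠ j; xᵢxᵢ* = vᵢvᵢ* for all i; y*y = Σᵢ vᵢ*vᵢ; and yy* = Σᵢ xᵢ*xᵢ. Then the element w = Σᵢ y*xᵢ*vᵢ satisfies w*w = ww* = y*y. -/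
/-- In a `*`-ring, given finitely many partial isometries `vᵢ`, `xᵢ` and `y` with
pairwise orthogonal range projections `vᵢ*vᵢ` (resp. `xᵢ*xᵢ`), with `xᵢxᵢ* = vᵢvᵢ*`,
`y*y = Σᵢ vᵢ*vᵢ` and `yy* = Σᵢ xᵢ*xᵢ`, the element `w = Σᵢ y*xᵢ*vᵢ` satisfies
`w*w = ww* = y*y`. -/
theorem partial_isometry_sum_unitary {R : Type*} [Ring R] [StarRing R]
    {I : Type*} [Fintype I] (v x : I → R) (y : R)
    (hv : ∀ i, v i * star (v i) * v i = v i)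
    (hx : ∀ i, x i * star (x i) * x i = x i)
    (hy : y * star y * y = y)
    (hvorth : ∀ i j, i ≠ j → (star (v i) * v i) * (star (v j) * v j) = 0)
    (hxorth : ∀ i j, i ≠ j → (star (x i) * x i) * (star (x j) * x j) = 0)
    (hxv : ∀ i, x i * star (x i) = v i * star (v i))
    (hyy : star y * y = ∑ i, star (v i) * v i)
    (hyy' : y * star y = ∑ i, star (x i) * x i) :
    star (∑ i, star y * star (x i) * v i) * (∑ i, star y * star (x i) * v i)
        = star y * y ∧
    (∑ i, star y * star (x i) * v i) * star (∑ i, star y * star (x i) * v i)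
        = star y * y := by
  classical
  have hx' : ∀ i, star (x i) * x i * star (x i) = star (x i) := fun i => by
    simpa [star_mul, mul_assoc] using congrArg star (hx i)
  have hv' : ∀ i, star (v i) * v i * star (v i) = star (v i) := fun i => by
    simpa [star_mul, mul_assoc] using congrArg star (hv i)
  have hy' : star y * y * star y = star y := by
    simpa [star_mul, mul_assoc] using congrArg star hy
  have hxo : ∀ i j, i ≠ j → x i * star (x j) = 0 := by
    intro i j h
    calc x i * star (x j)
        = (x i * star (x i) * x i) * (star (x j) * x j * star (x j)) := by
          rw [hx, hx']
      _ = x i * ((star (x i) * x i) * (star (x j) * x j)) * star (x j) := by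
          noncomm_ring
      _ = 0 := by rw [hxorth i j h]; simp
  have hvo : ∀ i j, i ≠ j → v i * star (v j) = 0 := by
    intro i j h
    calc v i * star (v j)
        = (v i * star (v i) * v i) * (star (v j) * v j * star (v j)) := by
          rw [hv, hv']
      _ = v i * ((star (v i) * v i) * (star (v j) * v j)) * star (v j) := by
          noncomm_ring
      _ = 0 := by rw [hvorth i j h]; simp
  have hxy : ∀ i, x i * (y * star y) = x i := by
    intro i
    rw [hyy', Finset.mul_sum]
    rw [Finset.sum_eq_single i]
    · rw [← mul_assoc, hx i]
    · intro j _ h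
      rw [← mul_assoc, hxo i j (Ne.symm h), zero_mul]
    · intro h; exact absurd (Finset.mem_univ i) h
  have hstar : ∀ i, star (star y * star (x i) * v i) = star (v i) * (x i * y) := by
    intro i; simp [star_mul, star_star, mul_assoc]
  constructor
  · rw [star_sum, Finset.sum_mul_sum]
    have step : ∀ i : I,
        ∑ j, star (star y * star (x i) * v i) * (star y * star (x j) * v j)
          = star (v i) * v i := by
      intro i
      rw [Finset.sum_eq_single i]
      · rw [hstar]
        calc star (v i) * (x i * y) * (star y * star (x i) * v i)
            = star (v i) * ((x i * (y * star y)) * star (x i)) * v i := by noncomm_ring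
          _ = star (v i) * (x i * star (x i)) * v i := by rw [hxy]
          _ = star (v i) * (v i * star (v i)) * v i := by rw [hxv]
          _ = (star (v i) * v i * star (v i)) * v i := by noncomm_ring
          _ = star (v i) * v i := by rw [hv']
      · intro j _ h
        rw [hstar]
        calc star (v i) * (x i * y) * (star y * star (x j) * v j)
            = star (v i) * ((x i * (y * star y)) * star (x j)) * v j := by noncomm_ring
          _ = star (v i) * (x i * star (x j)) * v j := by rw [hxy]
          _ = 0 := by rw [hxo i j (Ne.symm h)]; simp
      · intro h; exact absurd (Finset.mem_univ i) h
    rw [Finset.sum_congr rfl (fun i _ => step i), hyy]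
  · rw [star_sum, Finset.sum_mul_sum]
    have step : ∀ i : I,
        ∑ j, (star y * star (x i) * v i) * star (star y * star (x j) * v j)
          = star y * (star (x i) * x i) * y := by
      intro i
      rw [Finset.sum_eq_single i]
      · rw [hstar]
        calc (star y * star (x i) * v i) * (star (v i) * (x i * y))
            = star y * (star (x i) * ((v i * star (v i)) * x i)) * y := by noncomm_ring
          _ = star y * (star (x i) * (x i * star (x i) * x i)) * y := by
              rw [← hxv]
          _ = star y * (star (x i) * x i) * y := by rw [hx]
      · intro j _ h
        rw [hstar]
        calc (star y * star (x i) * v i) * (star (v j) * (x j * y))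
            = star y * (star (x i) * ((v i * star (v j)) * x j)) * y := by noncomm_ring
          _ = 0 := by rw [hvo i j (Ne.symm h)]; simp
      · intro h; exact absurd (Finset.mem_univ i) h
    rw [Finset.sum_congr rfl (fun i _ => step i)]
    calc ∑ i, star y * (star (x i) * x i) * y
        = star y * (∑ i, star (x i) * x i) * y := by
          rw [Finset.mul_sum, Finset.sum_mul]
      _ = star y * (y * star y) * y := by rw [hyy']
      _ = (star y * y * star y) * y := by noncomm_ring
      _ = star y * y := by rw [hy']
end

section
/- Let R be a unital *-algebra over ℂ and let τ : R → ℂ be a linear functional that is tracial (τ(ab) = τ(ba) for all a, b ∈ R). Let y ∈ R satisfy yy*y = y, and set p = y*y and f = yy*; assume τ(p) ≠ 0. Let N be a (not necessarily unital) subalgebra of R with f ∈ N and x = fxf for all x ∈ N, and let P be a subalgebra of R with p ∈ P and x = pxp for all x ∈ P. Write N⁰ = N ∩ ker τ and P⁰ = P ∩ ker τ, and let y*N⁰y = {y*sy : s ∈ N⁰} and yP⁰y* = {yty* : t ∈ P⁰}. If Λ°(y*N⁰y, P⁰) ⊆ ker τ, then Λ°(N⁰, yP⁰y*) ⊆ ker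 τ. -/
section Monoid

variable {M : Type*} [Monoid M]

theorem List.mul_prod_of_forall_mul_eq {e : M} {l : List M} (hl : l ≠ [])
    (h : ∀ x ∈ l, e * x = x) : e * l.prod = l.prod := by
  obtain ⟨a, t, rfl⟩ := List.exists_cons_of_ne_nil hl
  rw [List.prod_cons, ← mul_assoc, h a List.mem_cons_self]

theorem List.prod_map_conj {y z : M} {l : List M} (hl : l ≠ [])
    (h : ∀ x ∈ l, z * y * x = x) : (l.map fun x => y * x * z).prod = y * l.prod * z := by
  induction l with
  | nil => contradiction
  | cons a t ih =>
    rcases eq_or_ne t [] with rfl | ht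
    · simp
    have ht_fix : ∀ x ∈ t, z * y * x = x := fun x hx => h x (List.mem_cons_of_mem a hx)
    calc ((a :: t).map fun x => y * x * z).prod
        = y * a * z * (y * t.prod * z) := by rw [List.map_cons, List.prod_cons, ih ht ht_fix]
      _ = y * a * (z * y * t.prod) * z := by simp only [mul_assoc]
      _ = y * (a :: t).prod * z := by
        rw [List.mul_prod_of_forall_mul_eq ht ht_fix, List.prod_cons]; simp only [mul_assoc]

theorem IsIdempotentElem.mul_eq_of_eq_mul_mul {e t : M} (he : IsIdempotentElem e)
    (ht : t = e * t * e) : e * t = t := by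
  rw [ht, ← mul_assoc, ← mul_assoc, he.eq]

theorem exists_list_of_mem_altSet {N : Type*} [Monoid N] (g : M → N) {X' Y' : Set M}
    {X Y : Set N} (hX : X ⊆ g '' X') (hY : Y ⊆ g '' Y') {m : N} (hm : m ∈ altSet X Y) :
    ∃ l : List M, l ≠ [] ∧ (∀ x ∈ l, x ∈ X' ∪ Y') ∧ l.prod ∈ altSet X' Y' ∧
      (l.map g).prod = m := by
  obtain ⟨n, hn, c, lab, hc, halt, rfl⟩ := hm
  have lift : ∀ j, ∃ a, (if lab j then a ∈ X' else a ∈ Y') ∧ g a = c j := by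
    intro j
    have hcj := hc j
    split_ifs at hcj ⊢
    · exact hX hcj
    · exact hY hcj
  choose a ha hga using lift
  refine ⟨List.ofFn a, ?_, ?_, ⟨n, hn, a, lab, ha, halt, rfl⟩, ?_⟩
  · rw [Ne, List.ofFn_eq_nil_iff]
    exact hn.ne'
  · intro x hx
    obtain ⟨j, rfl⟩ := List.mem_ofFn.mp hx
    have haj := ha j
    split_ifs at haj
    · exact Or.inl haj
    · exact Or.inr haj
  · rw [List.map_ofFn, show g ∘ a = c from funext hga]

end Monoid

theorem star_mul_self_mul_star_of_mul_star_mul_self {R : Type*} [Semigroup R] [StarMul R]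
    {y : R} (hy : y * star y * y = y) : star y * y * star y = star y := by
  have h := congrArg star hy
  rwa [star_mul, star_mul, star_star, ← mul_assoc] at h

theorem freeness_transport_general {R : Type*} [Ring R] [Algebra ℂ R] [StarRing R]
    (τ : R →ₗ[ℂ] ℂ) (htr : ∀ a b : R, τ (a * b) = τ (b * a))
    (y : R) (hy : y * star y * y = y)
    (N P : NonUnitalSubalgebra ℂ R)
    (hNcorner : ∀ x ∈ N, x = (y * star y) * x * (y * star y))
    (hPcorner : ∀ x ∈ P, x = (star y * y) * x * (star y * y))
    (hyp : altSet ((fun s => star y * s * y) '' { x : R | x ∈ N ∧ τ x = 0 })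
                  { x : R | x ∈ P ∧ τ x = 0 } ⊆ { x : R | τ x = 0 }) :
    altSet { x : R | x ∈ N ∧ τ x = 0 }
           ((fun t => y * t * star y) '' { x : R | x ∈ P ∧ τ x = 0 })
      ⊆ { x : R | τ x = 0 } := by
  have hystar := star_mul_self_mul_star_of_mul_star_mul_self hy
  have hp : IsIdempotentElem (star y * y) := by
    rw [IsIdempotentElem, ← mul_assoc, hystar]
  have hN : { x : R | x ∈ N ∧ τ x = 0 } ⊆ (fun a => y * a * star y) ''
      ((fun s => star y * s * y) '' { x : R | x ∈ N ∧ τ x = 0 }) := by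
    intro s hs
    refine ⟨_, ⟨s, hs, rfl⟩, ?_⟩
    simpa only [mul_assoc] using (hNcorner s hs.1).symm
  intro m hm
  obtain ⟨l, hl, hlXY, hlalt, rfl⟩ := exists_list_of_mem_altSet _ hN subset_rfl hm
  have hfix : ∀ x ∈ l, star y * y * x = x := by
    intro x hx
    rcases hlXY x hx with ⟨s, -, rfl⟩ | ⟨hxP, -⟩
    · simp only [← mul_assoc, hystar]
    · exact hp.mul_eq_of_eq_mul_mul (hPcorner x hxP)
  show τ (l.map fun a => y * a * star y).prod = 0
  rw [List.prod_map_conj hl hfix, htr, ← mul_assoc, List.mul_prod_of_forall_mul_eq hl hfix]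
  exact hyp hlalt

/-- Transport of the freeness condition by a partial isometry `y` with `p = y*y`,
`f = yy*`: if `N` lives in the corner `fRf`, `P` lives in the corner `pRp`, `τ` is
tracial with `τ(p) ≠ 0`, and `Λ°(y*N⁰y, P⁰) ⊆ ker τ`, then `Λ°(N⁰, yP⁰y*) ⊆ ker τ`. -/
theorem freeness_transport {R : Type*} [Ring R] [Algebra ℂ R] [StarRing R]
    [StarModule ℂ R]
    (τ : R →ₗ[ℂ] ℂ) (htr : ∀ a b : R, τ (a * b) = τ (b * a))
    (y : R) (hy : y * star y * y = y)
    (hτp : τ (star y * y) ≠ 0)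
    (N P : NonUnitalSubalgebra ℂ R)
    (hfN : y * star y ∈ N)
    (hNcorner : ∀ x ∈ N, x = (y * star y) * x * (y * star y))
    (hpP : star y * y ∈ P)
    (hPcorner : ∀ x ∈ P, x = (star y * y) * x * (star y * y))
    (hyp : altSet ((fun s => star y * s * y) '' { x : R | x ∈ N ∧ τ x = 0 })
                  { x : R | x ∈ P ∧ τ x = 0 } ⊆ { x : R | τ x = 0 }) :
    altSet { x : R | x ∈ N ∧ τ x = 0 }
           ((fun t => y * t * star y) '' { x : R | x ∈ P ∧ τ x = 0 })
      ⊆ { x : R | τ x = 0 } :=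
  freeness_transport_general τ htr y hy N P hNcorner hPcorner hyp
end

section
/- Let M be a unital *-algebra over ℂ, let A and B be unital subalgebras of M, let D be a unital *-subalgebra of A ∩ B, and let E_A : A → D and E_B : B → D be conditional expectations. Let q ∈ D satisfy q = q* = q², and let v₀, v₁, …, v_ℓ ∈ D satisfy vⱼvⱼ*vⱼ = vⱼ, vⱼ*vⱼ = q(vⱼ*vⱼ) = (vⱼ*vⱼ)q for each j, and Σ_{j=0}^{ℓ} vⱼvⱼ* = 1. Then every element of D ∪ Λ°(A ∩ ker E_A, B ∩ ker E_B) is a finite linear combination of elements of the form vᵢ z vⱼ* with 0 ≤ i, j ≤ ℓ and z ∈ qDq ∪ Λ°(qAq ∩ ker E_A, qBq ∩ ker E_B). -/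
/-!
Write `1 = Σₖ vₖvₖ*`. Inserting this on both sides of `x` gives `x = Σᵢⱼ vᵢ (vᵢ* x vⱼ) vⱼ*`, and
inserting it between consecutive factors of an alternating product `c₁⋯cₙ` gives
`vᵢ* c₁⋯cₙ vⱼ = Σ (vᵢ* c₁ v_{k₁})(v_{k₁}* c₂ v_{k₂})⋯(v_{kₙ₋₁}* cₙ vⱼ)`. Since `vₖ = vₖ q`, every
compressed factor `vₐ* c v_b` lies in the corner `qMq`, and the bimodule property of the
conditional expectations keeps it in the kernel; the labels of the factors are unchanged, so
each summand is again alternating.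
-/

section Sandwich

variable {R M ι : Type*} [CommSemiring R] [Semiring M] [Algebra R M] [Fintype ι]
  {u w : ι → M}

theorem eq_sum_sandwich (h : ∑ k, u k * w k = 1) (x : M) :
    x = ∑ i, ∑ j, u i * (w i * x * u j) * w j := by
  calc x = (∑ i, u i * w i) * x * (∑ j, u j * w j) := by rw [h, one_mul, mul_one]
    _ = _ := by simp only [Finset.sum_mul, Finset.mul_sum, mul_assoc]; exact Finset.sum_comm

theorem sandwich_mul (h : ∑ k, u k * w k = 1) (x y : M) (i j : ι) :
    w i * (x * y) * u j = ∑ k, (w i * x * u k) * (w k * y * u j) := by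
  calc w i * (x * y) * u j = w i * x * (∑ k, u k * w k) * (y * u j) := by
        rw [h, mul_one]; simp only [mul_assoc]
    _ = _ := by simp only [Finset.sum_mul, Finset.mul_sum, mul_assoc]

theorem mem_span_of_sandwich_mem_span (h : ∑ k, u k * w k = 1) {x : M} {S : Set M}
    (hx : ∀ i j, w i * x * u j ∈ Submodule.span R S) :
    x ∈ Submodule.span R {y | ∃ (i j : ι) (z : M), z ∈ S ∧ y = u i * z * w j} := by
  rw [eq_sum_sandwich h x]
  refine Submodule.sum_mem _ fun i _ => Submodule.sum_mem _ fun j _ => ?_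
  have hle : Submodule.span R S ≤ (Submodule.span R
      {y | ∃ (i j : ι) (z : M), z ∈ S ∧ y = u i * z * w j}).comap
        ((LinearMap.mulRight R (w j)).comp (LinearMap.mulLeft R (u i))) :=
    Submodule.span_le.2 fun z hz => Submodule.subset_span ⟨i, j, z, hz, rfl⟩
  exact hle (hx i j)

theorem sandwich_prod_mem_span (h : ∑ k, u k * w k = 1) :
    ∀ (n : ℕ) (c : Fin (n + 1) → M) (i j : ι),
      w i * (List.ofFn c).prod * u j ∈ Submodule.span R
        {p | ∃ c' : Fin (n + 1) → M, (∀ t, ∃ a b, c' t = w a * c t * u b) ∧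
          p = (List.ofFn c').prod}
  | 0, c, i, j => Submodule.subset_span
      ⟨fun _ => w i * c 0 * u j,
        fun t => ⟨i, j, by rw [Subsingleton.elim (α := Fin 1) t 0]⟩, by simp⟩
  | n + 1, c, i, j => by
    rw [List.ofFn_succ, List.prod_cons, sandwich_mul h]
    refine Submodule.sum_mem _ fun k _ => ?_
    have hle : Submodule.span R
          {p | ∃ c' : Fin (n + 1) → M, (∀ t, ∃ a b, c' t = w a * c t.succ * u b) ∧
            p = (List.ofFn c').prod} ≤
        (Submodule.span R
          {p | ∃ c' : Fin (n + 2) → M, (∀ t, ∃ a b, c' t = w a * c t * u b) ∧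
            p = (List.ofFn c').prod}).comap (LinearMap.mulLeft R (w i * c 0 * u k)) := by
      refine Submodule.span_le.2 ?_
      rintro _ ⟨c', hc', rfl⟩
      refine Submodule.subset_span ⟨Fin.cons (w i * c 0 * u k) c', fun t => ?_, by simp [mul_assoc]⟩
      refine Fin.cases ⟨i, k, rfl⟩ (fun s => ?_) t
      simpa only [Fin.cons_succ] using hc' s
    exact hle (sandwich_prod_mem_span h n (fun t => c t.succ) k j)

theorem sandwich_mem_span_altSet (h : ∑ k, u k * w k = 1) {X Y X' Y' : Set M}
    (hX : ∀ x ∈ X, ∀ a b, w a * x * u b ∈ X') (hY : ∀ y ∈ Y, ∀ a b, w a * y * u b ∈ Y')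
    {x : M} (hx : x ∈ altSet X Y) (i j : ι) :
    w i * x * u j ∈ Submodule.span R (altSet X' Y') := by
  obtain ⟨_ | n, hn, c, lab, hc, halt, rfl⟩ := hx
  · exact absurd hn (lt_irrefl 0)
  refine Submodule.span_mono ?_ (sandwich_prod_mem_span h n c i j)
  rintro _ ⟨c', hc', rfl⟩
  refine ⟨n + 1, n.succ_pos, c', lab, fun t => ?_, halt, rfl⟩
  obtain ⟨a, b, hct⟩ := hc' t
  have hlab := hc t
  split_ifs at hlab ⊢ <;> rw [hct]
  exacts [hX _ hlab a b, hY _ hlab a b]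

end Sandwich

theorem mul_eq_self_of_mul_mul_eq_self {M : Type*} [Semigroup M] {v w p : M}
    (hv : v * w * v = v) (hp : w * v * p = w * v) : v * p = v :=
  calc v * p = v * (w * v * p) := by rw [← mul_assoc, ← mul_assoc, hv]
    _ = v := by rw [hp, ← mul_assoc, hv]

theorem star_mul_mul_eq_corner {M : Type*} [Monoid M] [StarMul M] {p v w : M}
    (hp : star p = p) (hv : v * p = v) (hw : w * p = w) (y : M) :
    star v * y * w = p * (star v * y * w) * p := by
  have hpv : p * star v = star v := by rw [← hp, ← star_mul, hv]
  rw [show p * (star v * y * w) * p = p * star v * y * (w * p) by simp only [mul_assoc], hpv, hw]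

theorem mul_mul_mem_ker_of_bimodule {R M : Type*} [CommSemiring R] [Semiring M] [Algebra R M]
    {A D : Subalgebra R M} (hDA : D ≤ A) (E : ↥A →ₗ[R] ↥D)
    (hE : ∀ (d₁ d₂ : ↥D) (a : ↥A),
      ((E (⟨(d₁ : M), hDA d₁.2⟩ * a * ⟨(d₂ : M), hDA d₂.2⟩) : ↥D) : M)
        = (d₁ : M) * ((E a : ↥D) : M) * (d₂ : M))
    {x d₁ d₂ : M} (hx : x ∈ {x : M | ∃ hx : x ∈ A, E ⟨x, hx⟩ = 0})
    (hd₁ : d₁ ∈ D) (hd₂ : d₂ ∈ D) :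
    d₁ * x * d₂ ∈ {x : M | ∃ hx : x ∈ A, E ⟨x, hx⟩ = 0} := by
  obtain ⟨hxA, hEx⟩ := hx
  refine ⟨mul_mem (mul_mem (hDA hd₁) hxA) (hDA hd₂), Subtype.ext ?_⟩
  simpa [hEx] using hE ⟨d₁, hd₁⟩ ⟨d₂, hd₂⟩ ⟨x, hxA⟩

theorem corner_reduction_general {M : Type*} [Ring M] [Algebra ℂ M] [StarRing M]
    (A B D : Subalgebra ℂ M) (hDA : D ≤ A) (hDB : D ≤ B)
    (hDstar : ∀ x ∈ D, star x ∈ D)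
    (EA : ↥A →ₗ[ℂ] ↥D) (EB : ↥B →ₗ[ℂ] ↥D)
    (hEA2 : ∀ (d₁ d₂ : ↥D) (a : ↥A),
      ((EA (⟨(d₁ : M), hDA d₁.2⟩ * a * ⟨(d₂ : M), hDA d₂.2⟩) : ↥D) : M)
        = (d₁ : M) * ((EA a : ↥D) : M) * (d₂ : M))
    (hEB2 : ∀ (d₁ d₂ : ↥D) (b : ↥B),
      ((EB (⟨(d₁ : M), hDB d₁.2⟩ * b * ⟨(d₂ : M), hDB d₂.2⟩) : ↥D) : M)
        = (d₁ : M) * ((EB b : ↥D) : M) * (d₂ : M))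
    (q : M) (hqstar : star q = q)
    (ℓ : ℕ) (v : Fin (ℓ + 1) → M) (hvD : ∀ j, v j ∈ D)
    (hvpi : ∀ j, v j * star (v j) * v j = v j)
    (hvq : ∀ j, star (v j) * v j = q * (star (v j) * v j) ∧
                star (v j) * v j = (star (v j) * v j) * q)
    (hvsum : ∑ j, v j * star (v j) = 1) :
    (D : Set M) ∪ altSet { x : M | ∃ hx : x ∈ A, EA ⟨x, hx⟩ = 0 }
                         { x : M | ∃ hx : x ∈ B, EB ⟨x, hx⟩ = 0 }
      ⊆ (Submodule.span ℂ { x : M | ∃ (i j : Fin (ℓ + 1)) (z : M),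
          z ∈ ((fun d => q * d * q) '' (D : Set M)) ∪
              altSet (((fun a => q * a * q) '' (A : Set M)) ∩
                        { x : M | ∃ hx : x ∈ A, EA ⟨x, hx⟩ = 0 })
                     (((fun b => q * b * q) '' (B : Set M)) ∩
                        { x : M | ∃ hx : x ∈ B, EB ⟨x, hx⟩ = 0 }) ∧
          x = v i * z * star (v j) } : Set M) := by
  have hcorner (a b : Fin (ℓ + 1)) (y : M) :
      star (v a) * y * v b = q * (star (v a) * y * v b) * q :=
    star_mul_mul_eq_corner hqstar (mul_eq_self_of_mul_mul_eq_self (hvpi a) (hvq a).2.symm)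
      (mul_eq_self_of_mul_mul_eq_self (hvpi b) (hvq b).2.symm) y
  have hsandwich_mem (a b : Fin (ℓ + 1)) {S : Subalgebra ℂ M} (hDS : D ≤ S) {y : M} (hy : y ∈ S) :
      star (v a) * y * v b ∈ S :=
    mul_mem (mul_mem (hDS (hDstar _ (hvD a))) hy) (hDS (hvD b))
  rintro x (hx | hx) <;> refine mem_span_of_sandwich_mem_span hvsum fun i j => ?_
  · exact Submodule.subset_span (Or.inl ⟨_, hsandwich_mem i j le_rfl hx, (hcorner i j x).symm⟩)
  · refine Submodule.span_mono Set.subset_union_right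
      (sandwich_mem_span_altSet hvsum ?_ ?_ hx i j)
    · exact fun y hy a b => ⟨⟨_, hsandwich_mem a b hDA hy.1, (hcorner a b y).symm⟩,
        mul_mul_mem_ker_of_bimodule hDA EA hEA2 hy (hDstar _ (hvD a)) (hvD b)⟩
    · exact fun y hy a b => ⟨⟨_, hsandwich_mem a b hDB hy.1, (hcorner a b y).symm⟩,
        mul_mul_mem_ker_of_bimodule hDB EB hEB2 hy (hDstar _ (hvD a)) (hvD b)⟩

/-- Reduction to the corner of an abelian projection (Theorem 2.1(a)): if
`q ∈ D` is a projection and `v₀, …, v_ℓ ∈ D` are partial isometries with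
`vⱼ*vⱼ ≤ q` and `Σⱼ vⱼvⱼ* = 1`, then every element of
`D ∪ Λ°(A ⊖ D, B ⊖ D)` is a linear combination of elements `vᵢ z vⱼ*` with
`z ∈ qDq ∪ Λ°(qAq ⊖ D, qBq ⊖ D)`. -/
theorem corner_reduction {M : Type*} [Ring M] [Algebra ℂ M] [StarRing M]
    [StarModule ℂ M]
    (A B D : Subalgebra ℂ M) (hDA : D ≤ A) (hDB : D ≤ B)
    (hDstar : ∀ x ∈ D, star x ∈ D)
    (EA : ↥A →ₗ[ℂ] ↥D) (EB : ↥B →ₗ[ℂ] ↥D)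
    (hEA1 : ∀ d : ↥D, EA ⟨(d : M), hDA d.2⟩ = d)
    (hEA2 : ∀ (d₁ d₂ : ↥D) (a : ↥A),
      ((EA (⟨(d₁ : M), hDA d₁.2⟩ * a * ⟨(d₂ : M), hDA d₂.2⟩) : ↥D) : M)
        = (d₁ : M) * ((EA a : ↥D) : M) * (d₂ : M))
    (hEB1 : ∀ d : ↥D, EB ⟨(d : M), hDB d.2⟩ = d)
    (hEB2 : ∀ (d₁ d₂ : ↥D) (b : ↥B),
      ((EB (⟨(d₁ : M), hDB d₁.2⟩ * b * ⟨(d₂ : M), hDB d₂.2⟩) : ↥D) : M)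
        = (d₁ : M) * ((EB b : ↥D) : M) * (d₂ : M))
    (q : M) (hqD : q ∈ D) (hqstar : star q = q) (hqidem : q * q = q)
    (ℓ : ℕ) (v : Fin (ℓ + 1) → M) (hvD : ∀ j, v j ∈ D)
    (hvpi : ∀ j, v j * star (v j) * v j = v j)
    (hvq : ∀ j, star (v j) * v j = q * (star (v j) * v j) ∧
                star (v j) * v j = (star (v j) * v j) * q)
    (hvsum : ∑ j, v j * star (v j) = 1) :
    (D : Set M) ∪ altSet { x : M | ∃ hx : x ∈ A, EA ⟨x, hx⟩ = 0 }
                         { x : M | ∃ hx : x ∈ B, EB ⟨x, hx⟩ = 0 }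
      ⊆ (Submodule.span ℂ { x : M | ∃ (i j : Fin (ℓ + 1)) (z : M),
          z ∈ ((fun d => q * d * q) '' (D : Set M)) ∪
              altSet (((fun a => q * a * q) '' (A : Set M)) ∩
                        { x : M | ∃ hx : x ∈ A, EA ⟨x, hx⟩ = 0 })
                     (((fun b => q * b * q) '' (B : Set M)) ∩
                        { x : M | ∃ hx : x ∈ B, EB ⟨x, hx⟩ = 0 }) ∧
          x = v i * z * star (v j) } : Set M) :=
  corner_reduction_general A B D hDA hDB hDstar EA EB hEA2 hEB2 q hqstar ℓ v hvD hvpi hvq hvsum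
end
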